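/- Let A ∈ GL(n, ℤ) and let φ : B_r → ℂⁿ be symplectic and Λ_A-equivariant with φ(0) = 0. Then there exists a permutation σ of {1, …, n} such that |φ(z)ᵢ| = |z_{σ(i)}| for every z ∈ B_r and every index i; moreover A is necessarily the permutation matrix of σ, i.e. Aᵢⱼ = 1 if j = σ(i) and Aᵢⱼ = 0 otherwise. -/

import Mathlib

open scoped BigOperators Topology

/-- The standard symplectic form on `ℂⁿ`: `ω₀(u, v) = ∑ₖ Im(conj(uₖ)·vₖ)`. -/
noncomputable def omega0 (n : ℕ) (u v : EuclideanSpace ℂ (Fin n)) : ℝ :=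
  ∑ k, ((starRingEnd ℂ) (u k) * v k).im

/-- The componentwise rotation action of the `n`-torus `Tⁿ = (S¹)ⁿ` on `ℂⁿ`. -/
def torusSMul (n : ℕ) (t : Fin n → Circle) (z : EuclideanSpace ℂ (Fin n)) :
    EuclideanSpace ℂ (Fin n) :=
  WithLp.toLp 2 (fun k => (t k : ℂ) * z k)

/-- For `A ∈ GL(n, ℤ)`, the induced torus automorphism `Λ_A(t)ᵢ = ∏ⱼ tⱼ^{Aᵢⱼ}`. -/
noncomputable def torusAut (n : ℕ) (A : GL (Fin n) ℤ) (t : Fin n → Circle) : Fin n → Circle :=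
  fun i => ∏ j, t j ^ ((A : Matrix (Fin n) (Fin n) ℤ) i j)

/-- `φ` is symplectic on the closed ball of radius `r`: it is `C^∞` there and its
Fréchet derivative (within the ball) preserves `ω₀` at every point. -/
noncomputable def IsSymplecticOn (n : ℕ) (r : ℝ)
    (φ : EuclideanSpace ℂ (Fin n) → EuclideanSpace ℂ (Fin n)) : Prop :=
  ContDiffOn ℝ (⊤ : ℕ∞) φ (Metric.closedBall 0 r) ∧
    ∀ z ∈ Metric.closedBall (0 : EuclideanSpace ℂ (Fin n)) r, ∀ u v,
      omega0 n (fderivWithin ℝ φ (Metric.closedBall 0 r) z u)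
        (fderivWithin ℝ φ (Metric.closedBall 0 r) z v) = omega0 n u v

/-- `φ` is `Λ_A`-equivariant on the closed ball of radius `r`. -/
def IsEquivariantOn (n : ℕ) (r : ℝ) (A : GL (Fin n) ℤ)
    (φ : EuclideanSpace ℂ (Fin n) → EuclideanSpace ℂ (Fin n)) : Prop :=
  ∀ t : Fin n → Circle, ∀ z ∈ Metric.closedBall (0 : EuclideanSpace ℂ (Fin n)) r,
    φ (torusSMul n t z) = torusSMul n (torusAut n A t) (φ z)

lemma omega0_X (n : ℕ) (z v : EuclideanSpace ℂ (Fin n)) (j : Fin n) :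
    omega0 n (Complex.I • EuclideanSpace.single j (z j)) v
      = -((starRingEnd ℂ) (z j) * v j).re := by
  unfold omega0
  have : ∀ k, (((starRingEnd ℂ) ((Complex.I • EuclideanSpace.single j (z j) : EuclideanSpace ℂ (Fin n)) k)) * v k).im
      = if k = j then -((starRingEnd ℂ) (z j) * v j).re else 0 := by
    intro k
    by_cases h : k = j
    · subst h
      simp [EuclideanSpace.single_apply, Complex.mul_im, Complex.mul_re]
      ring
    · simp [EuclideanSpace.single_apply, h]
  simp only [this]
  simp
lemma omega0_Y (n : ℕ) (m : Fin n → ℤ) (w u : EuclideanSpace ℂ (Fin n)) :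
    omega0 n (WithLp.toLp 2 (fun i => (m i : ℂ) * Complex.I * w i) : EuclideanSpace ℂ (Fin n)) u
      = -∑ i, (m i : ℝ) * ((starRingEnd ℂ) (w i) * u i).re := by
  unfold omega0
  rw [← Finset.sum_neg_distrib]
  congr 1; funext i
  simp [Complex.mul_im, Complex.mul_re]
  ring
lemma omega0_self_I (n : ℕ) (u : EuclideanSpace ℂ (Fin n)) :
    omega0 n u (Complex.I • u) = ∑ k, Complex.normSq (u k) := by
  unfold omega0
  congr 1; funext k
  simp [Complex.mul_im, Complex.normSq_apply, Complex.mul_re]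
lemma Circle.coe_zpow' (z : Circle) (m : ℤ) : ((z ^ m : Circle) : ℂ) = (z : ℂ) ^ m := by
  have hp : ∀ k : ℕ, ((z ^ k : Circle) : ℂ) = (z : ℂ) ^ k := fun k => map_pow Circle.coeHom z k
  cases m with
  | ofNat k => simpa [zpow_natCast] using hp k
  | negSucc k => simp [zpow_negSucc, hp]
lemma norm_torusSMul (n : ℕ) (t : Fin n → Circle) (z : EuclideanSpace ℂ (Fin n)) :
    ‖torusSMul n t z‖ = ‖z‖ := by
  rw [EuclideanSpace.norm_eq, EuclideanSpace.norm_eq]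
  congr 1
  refine Finset.sum_congr rfl fun k _ => ?_
  simp [torusSMul, Circle.norm_coe]
lemma key_deriv (n : ℕ) (r : ℝ) (A : GL (Fin n) ℤ)
    (φ : EuclideanSpace ℂ (Fin n) → EuclideanSpace ℂ (Fin n))
    (hd : DifferentiableOn ℝ φ (Metric.closedBall 0 r))
    (hequiv : IsEquivariantOn n r A φ)
    (z : EuclideanSpace ℂ (Fin n))
    (hz : z ∈ Metric.closedBall (0 : EuclideanSpace ℂ (Fin n)) r) (j i : Fin n) :
    fderivWithin ℝ φ (Metric.closedBall 0 r) z
        (Complex.I • EuclideanSpace.single j (z j)) i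
      = (((A : Matrix (Fin n) (Fin n) ℤ) i j : ℤ) : ℂ) * Complex.I * φ z i := by
  classical
  set B := Metric.closedBall (0 : EuclideanSpace ℂ (Fin n)) r with hB
  set w : EuclideanSpace ℂ (Fin n) := EuclideanSpace.single j (z j) with hw
  set c : ℝ → EuclideanSpace ℂ (Fin n) :=
    fun θ => z + (Complex.exp (θ * Complex.I) - 1) • w with hc
  set m : ℤ := (A : Matrix (Fin n) (Fin n) ℤ) i j with hm
  set D := fderivWithin ℝ φ B z with hD
  -- the curve coincides with the torus action
  have hct : ∀ θ : ℝ, c θ = torusSMul n (fun k => if k = j then Circle.exp θ else 1) z := by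
    intro θ; ext k
    by_cases h : k = j
    · subst h
      simp only [hc, torusSMul, if_pos rfl, Circle.coe_exp]
      show z k + (Complex.exp (θ * Complex.I) - 1) * w k = _
      rw [hw]
      simp [EuclideanSpace.single_apply]
      ring
    · show z k + (Complex.exp (θ * Complex.I) - 1) * w k = _
      simp [hw, torusSMul, EuclideanSpace.single_apply, h]
  have hcB : ∀ θ : ℝ, c θ ∈ B := by
    intro θ
    have hz' : ‖z‖ ≤ r := by
      have := hz; rw [hB] at this
      simpa [Metric.mem_closedBall, dist_zero_right] using this
    rw [hB, Metric.mem_closedBall, dist_zero_right, hct θ, norm_torusSMul]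
    exact hz'
  have hc0 : c 0 = z := by
    simp [hc]
  -- derivative of the curve
  have hexp : HasDerivAt (fun θ : ℝ => Complex.exp (θ * Complex.I)) Complex.I 0 := by
    have h1 : HasDerivAt (fun θ : ℝ => (θ : ℂ)) 1 0 := by
      simpa using (hasDerivAt_id (0:ℝ)).ofReal_comp
    have h2 := (h1.mul_const Complex.I).cexp
    simpa using h2
  have hcurve : HasDerivAt c (Complex.I • w) 0 := by
    have h3 := ((hexp.sub_const 1).smul_const w).const_add z
    exact h3
  -- derivative of φ ∘ c
  have hφz : HasFDerivWithinAt φ D B z := (hd z hz).hasFDerivWithinAt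
  have hφc : HasDerivAt (φ ∘ c) (D (Complex.I • w)) 0 := by
    rw [← hasDerivWithinAt_univ]
    have := HasFDerivWithinAt.comp_hasDerivWithinAt (t := B) 0
      (hc0 ▸ hφz) (hcurve.hasDerivWithinAt (s := Set.univ)) (fun θ _ => hcB θ)
    exact this
  have hleft : HasDerivAt (fun θ => φ (c θ) i) (D (Complex.I • w) i) 0 := by
    have := ((EuclideanSpace.proj i).restrictScalars ℝ).hasFDerivAt.comp_hasDerivAt 0 hφc
    exact this
  -- the right-hand side via equivariance
  have hfun : (fun θ : ℝ => φ (c θ) i)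
      = fun θ : ℝ => Complex.exp ((m : ℂ) * (θ * Complex.I)) * φ z i := by
    funext θ
    rw [hct θ, hequiv _ z hz]
    show ((torusAut n A (fun k => if k = j then Circle.exp θ else 1) i : Circle) : ℂ) * φ z i = _
    have : torusAut n A (fun k => if k = j then Circle.exp θ else 1) i = Circle.exp θ ^ m := by
      rw [torusAut]
      rw [Finset.prod_eq_single j (fun k _ hk => by simp [if_neg hk]) (by simp)]
      simp [hm]
    rw [this, Circle.coe_zpow', Circle.coe_exp, ← Complex.exp_int_mul]
  have hright : HasDerivAt (fun θ => φ (c θ) i) ((m : ℂ) * Complex.I * φ z i) 0 := by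
    rw [hfun]
    have h1 : HasDerivAt (fun θ : ℝ => (θ : ℂ)) 1 0 := by
      simpa using (hasDerivAt_id (0:ℝ)).ofReal_comp
    have h2 := (((h1.mul_const Complex.I).const_mul (m : ℂ)).cexp).mul_const (φ z i)
    simpa using h2
  exact hleft.unique hright
lemma moment_eq (n : ℕ) (r : ℝ) (hr : 0 < r) (A : GL (Fin n) ℤ)
    (φ : EuclideanSpace ℂ (Fin n) → EuclideanSpace ℂ (Fin n))
    (hsymp : IsSymplecticOn n r φ) (hequiv : IsEquivariantOn n r A φ) (h0 : φ 0 = 0)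
    (z : EuclideanSpace ℂ (Fin n))
    (hz : z ∈ Metric.closedBall (0 : EuclideanSpace ℂ (Fin n)) r) (j : Fin n) :
    ∑ i, (((A : Matrix (Fin n) (Fin n) ℤ) i j : ℤ) : ℝ) * Complex.normSq (φ z i)
      = Complex.normSq (z j) := by
  classical
  set B := Metric.closedBall (0 : EuclideanSpace ℂ (Fin n)) r with hB
  have hd : DifferentiableOn ℝ φ B := hsymp.1.differentiableOn (by simp)
  have hzn : ‖z‖ ≤ r := by
    have := hz; rw [hB] at this; simpa [Metric.mem_closedBall, dist_zero_right] using this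
  set K := Complex.normSq (z j) with hK
  set F : ℝ → ℝ := fun s =>
    (∑ i, (((A : Matrix (Fin n) (Fin n) ℤ) i j : ℤ) : ℝ) * Complex.normSq (φ (s • z) i))
      - s ^ 2 * K with hF
  have hmaps : Set.MapsTo (fun u : ℝ => u • z) (Set.Icc (0:ℝ) 1) B := by
    intro u hu
    rw [hB, Metric.mem_closedBall, dist_zero_right, norm_smul]
    calc ‖u‖ * ‖z‖ ≤ 1 * ‖z‖ := by
          apply mul_le_mul_of_nonneg_right _ (norm_nonneg z)
          rw [Real.norm_eq_abs, abs_le]; exact ⟨by linarith [hu.1], hu.2⟩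
      _ ≤ r := by simpa using hzn
  have hFs : ∀ s ∈ Set.Icc (0:ℝ) 1, HasDerivWithinAt F 0 (Set.Icc (0:ℝ) 1) s := by
    intro s hs
    set ζ := s • z with hζ
    have hζB : ζ ∈ B := hmaps hs
    set Dζ := fderivWithin ℝ φ B ζ with hDζ
    set d : EuclideanSpace ℂ (Fin n) := Dζ z with hd2
    have hφζ : HasFDerivWithinAt φ Dζ B ζ := (hd ζ hζB).hasFDerivWithinAt
    have hγ : HasDerivWithinAt (fun u : ℝ => u • z) z (Set.Icc (0:ℝ) 1) s := by
      simpa using ((hasDerivAt_id s).smul_const z).hasDerivWithinAt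
    have hφγ : HasDerivWithinAt (fun u : ℝ => φ (u • z)) d (Set.Icc (0:ℝ) 1) s :=
      HasFDerivWithinAt.comp_hasDerivWithinAt s hφζ hγ hmaps
    have hp : ∀ i, HasDerivWithinAt (fun u : ℝ => φ (u • z) i) (d i) (Set.Icc (0:ℝ) 1) s := by
      intro i
      have := ((EuclideanSpace.proj i).restrictScalars ℝ).hasFDerivAt.comp_hasDerivWithinAt
        (f := fun u : ℝ => φ (u • z)) s hφγ
      exact this
    have hre : ∀ i, HasDerivWithinAt (fun u : ℝ => (φ (u • z) i).re) ((d i).re)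
        (Set.Icc (0:ℝ) 1) s := fun i => Complex.reCLM.hasFDerivAt.comp_hasDerivWithinAt s (hp i)
    have him : ∀ i, HasDerivWithinAt (fun u : ℝ => (φ (u • z) i).im) ((d i).im)
        (Set.Icc (0:ℝ) 1) s := fun i => Complex.imCLM.hasFDerivAt.comp_hasDerivWithinAt s (hp i)
    have hsq : ∀ i, HasDerivWithinAt (fun u : ℝ => Complex.normSq (φ (u • z) i))
        (((d i).re * (φ ζ i).re + (φ ζ i).re * (d i).re)
          + ((d i).im * (φ ζ i).im + (φ ζ i).im * (d i).im)) (Set.Icc (0:ℝ) 1) s := by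
      intro i
      have heq : (fun u : ℝ => Complex.normSq (φ (u • z) i))
          = fun u : ℝ => (φ (u • z) i).re * (φ (u • z) i).re
              + (φ (u • z) i).im * (φ (u • z) i).im := by
        funext u; rw [Complex.normSq_apply]
      rw [heq]
      exact ((hre i).mul (hre i)).add ((him i).mul (him i))
    have hsum : HasDerivWithinAt
        (fun u : ℝ => ∑ i, (((A : Matrix (Fin n) (Fin n) ℤ) i j : ℤ) : ℝ)
            * Complex.normSq (φ (u • z) i))
        (∑ i, (((A : Matrix (Fin n) (Fin n) ℤ) i j : ℤ) : ℝ)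
            * (((d i).re * (φ ζ i).re + (φ ζ i).re * (d i).re)
              + ((d i).im * (φ ζ i).im + (φ ζ i).im * (d i).im)))
        (Set.Icc (0:ℝ) 1) s :=
      HasDerivWithinAt.fun_sum fun i _ => (hsq i).const_mul _
    have hh : HasDerivWithinAt (fun u : ℝ => u ^ 2 * K) ((2:ℕ) * s ^ 1 * K)
        (Set.Icc (0:ℝ) 1) s := ((hasDerivAt_pow 2 s).mul_const K).hasDerivWithinAt
    have htot := hsum.sub hh
    -- identify the derivative with 0 using the symplectic identity
    have hkey : Dζ (Complex.I • EuclideanSpace.single j (ζ j))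
        = (WithLp.toLp 2 (fun i => (((A : Matrix (Fin n) (Fin n) ℤ) i j : ℤ) : ℂ) * Complex.I * φ ζ i) :
            EuclideanSpace ℂ (Fin n)) := by
      ext i
      exact key_deriv n r A φ hd hequiv ζ hζB j i
    have hsymp2 := hsymp.2 ζ hζB (Complex.I • EuclideanSpace.single j (ζ j)) z
    rw [hkey] at hsymp2
    rw [omega0_Y n (fun i => (A : Matrix (Fin n) (Fin n) ℤ) i j) (φ ζ) (Dζ z)] at hsymp2
    rw [omega0_X n ζ z j] at hsymp2
    have hs2 : ∑ i, (((A : Matrix (Fin n) (Fin n) ℤ) i j : ℤ) : ℝ)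
        * ((starRingEnd ℂ) (φ ζ i) * d i).re = ((starRingEnd ℂ) (ζ j) * z j).re := by
      have := neg_injective hsymp2
      exact this
    have hz2 : ((starRingEnd ℂ) (ζ j) * z j).re = s * K := by
      have hζj : ζ j = (s : ℂ) * z j := by
        rw [hζ]; show s • (z j) = _; simp [Complex.real_smul]
      rw [hζj, hK]
      simp [Complex.mul_re, Complex.normSq_apply, Complex.conj_re, Complex.conj_im]
      ring
    have hval : (∑ i, (((A : Matrix (Fin n) (Fin n) ℤ) i j : ℤ) : ℝ)
            * (((d i).re * (φ ζ i).re + (φ ζ i).re * (d i).re)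
              + ((d i).im * (φ ζ i).im + (φ ζ i).im * (d i).im)))
        - (2:ℕ) * s ^ 1 * K = 0 := by
      have hterm : ∀ i : Fin n, (((A : Matrix (Fin n) (Fin n) ℤ) i j : ℤ) : ℝ)
            * (((d i).re * (φ ζ i).re + (φ ζ i).re * (d i).re)
              + ((d i).im * (φ ζ i).im + (φ ζ i).im * (d i).im))
          = 2 * ((((A : Matrix (Fin n) (Fin n) ℤ) i j : ℤ) : ℝ)
            * ((starRingEnd ℂ) (φ ζ i) * d i).re) := by
        intro i
        simp [Complex.mul_re, Complex.conj_re, Complex.conj_im]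
        ring
      rw [Finset.sum_congr rfl fun i _ => hterm i, ← Finset.mul_sum, hs2, hz2]
      push_cast
      ring
    rw [hF]
    exact htot.congr_deriv hval
  have hcont : ContinuousOn F (Set.Icc (0:ℝ) 1) :=
    fun s hs => (hFs s hs).continuousWithinAt
  have hderiv : ∀ s ∈ Set.Ico (0:ℝ) 1, HasDerivWithinAt F 0 (Set.Ici s) s := by
    intro s hs
    exact (hFs s (Set.Ico_subset_Icc_self hs)).mono_of_mem_nhdsWithin (Icc_mem_nhdsGE_of_mem hs)
  have h10 : F 1 = F 0 :=
    constant_of_has_deriv_right_zero hcont hderiv 1 (Set.right_mem_Icc.2 zero_le_one)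
  have hF0 : F 0 = 0 := by
    rw [hF]
    simp [h0]
  have hF1 := h10.trans hF0
  rw [hF] at hF1
  simp only [one_smul, one_pow, one_mul] at hF1
  linarith [hF1]
lemma perm_of_nonneg (n : ℕ) (A : GL (Fin n) ℤ)
    (hA : ∀ i j, 0 ≤ (A : Matrix (Fin n) (Fin n) ℤ) i j)
    (hN : ∀ i j, 0 ≤ ((A⁻¹ : GL (Fin n) ℤ) : Matrix (Fin n) (Fin n) ℤ) i j) :
    ∃ σ : Equiv.Perm (Fin n), ∀ i j,
      (A : Matrix (Fin n) (Fin n) ℤ) i j = if j = σ i then 1 else 0 := by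
  classical
  set M : Matrix (Fin n) (Fin n) ℤ := (A : Matrix (Fin n) (Fin n) ℤ) with hM
  set N : Matrix (Fin n) (Fin n) ℤ := ((A⁻¹ : GL (Fin n) ℤ) : Matrix (Fin n) (Fin n) ℤ) with hNdef
  have hMN : M * N = 1 := by
    rw [hM, hNdef]
    exact_mod_cast Units.mul_inv A
  have hNM : N * M = 1 := by
    rw [hM, hNdef]
    exact_mod_cast Units.inv_mul A
  have key : ∀ i, ∃ k, N k i = 1 ∧ M i k = 1 ∧ ∀ k', k' ≠ k → M i k' = 0 := by
    intro i
    have h1 : ∑ k, M i k * N k i = 1 := by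
      have : (M * N) i i = 1 := by rw [hMN]; simp [Matrix.one_apply]
      rwa [Matrix.mul_apply] at this
    obtain ⟨k, _, hk⟩ := Finset.exists_ne_zero_of_sum_ne_zero
      (by rw [h1]; exact one_ne_zero)
    have hMik : 0 < M i k := by
      rcases lt_or_eq_of_le (hA i k) with h | h
      · exact h
      · exact absurd (by rw [← h, zero_mul]) hk
    have hNki : 0 < N k i := by
      rcases lt_or_eq_of_le (hN k i) with h | h
      · exact h
      · exact absurd (by rw [← h, mul_zero]) hk
    have hzero : ∀ k', k' ≠ k → M i k' = 0 := by
      intro k' hkk'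
      have h0 : (N * M) k k' = 0 := by
        rw [hNM]; simp [Matrix.one_apply]; exact fun h => hkk' h.symm
      rw [Matrix.mul_apply] at h0
      have := (Finset.sum_eq_zero_iff_of_nonneg
        (fun l _ => mul_nonneg (hN k l) (hA l k'))).mp h0 i (Finset.mem_univ i)
      have hNki1 : N k i ≠ 0 := hNki.ne'
      rcases mul_eq_zero.mp this with h | h
      · exact absurd h hNki1
      · exact h
    have hkk : N k i * M i k = 1 := by
      have h2 : ∑ l, N k l * M l k = 1 := by
        have : (N * M) k k = 1 := by rw [hNM]; simp [Matrix.one_apply]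
        rwa [Matrix.mul_apply] at this
      have hle : N k i * M i k ≤ 1 := by
        rw [← h2]
        exact Finset.single_le_sum (fun l _ => mul_nonneg (hN k l) (hA l k))
          (Finset.mem_univ i)
      have hge : 1 ≤ N k i * M i k := mul_pos hNki hMik
      omega
    rcases Int.mul_eq_one_iff_eq_one_or_neg_one.mp hkk with ⟨h1', h2'⟩ | ⟨h1', _⟩
    · exact ⟨k, h1', h2', hzero⟩
    · omega
  choose τ hτ1 hτ2 hτ3 using key
  have hinj : Function.Injective τ := by
    intro a b hab
    by_contra h
    have h0 : (M * N) a b = 0 := by rw [hMN]; simp [Matrix.one_apply, h]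
    rw [Matrix.mul_apply] at h0
    have := (Finset.sum_eq_zero_iff_of_nonneg
      (fun l _ => mul_nonneg (hA a l) (hN l b))).mp h0 (τ a) (Finset.mem_univ _)
    rw [hτ2 a, one_mul, hab, hτ1 b] at this
    exact one_ne_zero this
  refine ⟨Equiv.ofBijective τ (Finite.injective_iff_bijective.mp hinj), fun i j => ?_⟩
  by_cases h : j = τ i
  · subst h
    simp only [Equiv.ofBijective_apply, if_pos rfl]
    exact hτ2 i
  · rw [if_neg (by simpa [Equiv.ofBijective_apply] using h)]
    exact hτ3 i j h

/-- If `φ : B_r → ℂⁿ` is symplectic and `Λ_A`-equivariant with `φ(0) = 0`, then there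
is a permutation `σ` with `|φ(z)ᵢ| = |z_{σ(i)}|` for all `z ∈ B_r` and all `i`, and
`A` is necessarily the permutation matrix of `σ`. -/
theorem equivariant_symplectic_abs_permutes (n : ℕ) (hn : 1 ≤ n) (r : ℝ) (hr : 0 < r)
    (A : GL (Fin n) ℤ) (φ : EuclideanSpace ℂ (Fin n) → EuclideanSpace ℂ (Fin n))
    (hsymp : IsSymplecticOn n r φ) (hequiv : IsEquivariantOn n r A φ)
    (h0 : φ 0 = 0) :
    ∃ σ : Equiv.Perm (Fin n),
      (∀ z ∈ Metric.closedBall (0 : EuclideanSpace ℂ (Fin n)) r, ∀ i,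
        ‖φ z i‖ = ‖z (σ i)‖) ∧
      (∀ i j, (A : Matrix (Fin n) (Fin n) ℤ) i j = if j = σ i then 1 else 0) := by
  classical
  set B := Metric.closedBall (0 : EuclideanSpace ℂ (Fin n)) r with hB
  have hmem : B ∈ 𝓝 (0 : EuclideanSpace ℂ (Fin n)) := Metric.closedBall_mem_nhds 0 hr
  -- the derivative at 0 is invertible
  set D0 := fderivWithin ℝ φ B 0 with hD0def
  have h0B : (0 : EuclideanSpace ℂ (Fin n)) ∈ B := Metric.mem_closedBall_self hr.le
  have hker : ∀ x : EuclideanSpace ℂ (Fin n), D0 x = 0 → x = 0 := by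
    intro x hx
    have h1 := hsymp.2 0 h0B x (Complex.I • x)
    rw [← hB, ← hD0def, hx] at h1
    have hL : omega0 n (0 : EuclideanSpace ℂ (Fin n)) (D0 (Complex.I • x)) = 0 := by
      unfold omega0
      refine Finset.sum_eq_zero fun k _ => ?_
      show (((starRingEnd ℂ) ((0 : EuclideanSpace ℂ (Fin n)) k)) * _).im = 0
      simp
    rw [hL, omega0_self_I] at h1
    have hall := (Finset.sum_eq_zero_iff_of_nonneg
      (fun k _ => Complex.normSq_nonneg (x k))).mp h1.symm
    ext k
    exact Complex.normSq_eq_zero.mp (hall k (Finset.mem_univ k))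
  have hinj : Function.Injective D0 := by
    intro u v huv
    have := hker (u - v) (by rw [map_sub, huv, sub_self])
    exact sub_eq_zero.mp this
  have hbij : Function.Bijective (D0 : EuclideanSpace ℂ (Fin n) →ₗ[ℝ] EuclideanSpace ℂ (Fin n)) :=
    ⟨hinj, LinearMap.injective_iff_surjective.mp hinj⟩
  set eC := (LinearEquiv.ofBijective
    (D0 : EuclideanSpace ℂ (Fin n) →ₗ[ℝ] EuclideanSpace ℂ (Fin n)) hbij).toContinuousLinearEquiv
    with heC
  have hcoe : (eC : EuclideanSpace ℂ (Fin n) →L[ℝ] EuclideanSpace ℂ (Fin n)) = D0 := by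
    ext v; rfl
  have hCd : ContDiffAt ℝ (⊤ : ℕ∞) φ 0 := hsymp.1.contDiffAt hmem
  have hstrict : HasStrictFDerivAt φ
      (eC : EuclideanSpace ℂ (Fin n) →L[ℝ] EuclideanSpace ℂ (Fin n)) 0 := by
    rw [hcoe, hD0def, hB, fderivWithin_of_mem_nhds hmem]
    exact hCd.hasStrictFDerivAt (by simp)
  have hmap := hstrict.map_nhds_eq_of_equiv
  have himg : φ '' B ∈ 𝓝 (0 : EuclideanSpace ℂ (Fin n)) := by
    have himg0 : φ '' B ∈ Filter.map φ (𝓝 (0 : EuclideanSpace ℂ (Fin n))) :=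
      Filter.image_mem_map hmem
    rwa [hmap, h0] at himg0
  obtain ⟨ε, hε, hball⟩ := Metric.mem_nhds_iff.mp himg
  -- entries of A are nonnegative
  have hAnn : ∀ i j, 0 ≤ (A : Matrix (Fin n) (Fin n) ℤ) i j := by
    intro i j
    set wpt : EuclideanSpace ℂ (Fin n) := EuclideanSpace.single i (((ε/2 : ℝ) : ℂ)) with hwpt
    have hwb : wpt ∈ Metric.ball (0 : EuclideanSpace ℂ (Fin n)) ε := by
      rw [Metric.mem_ball, dist_zero_right, hwpt, EuclideanSpace.norm_single]
      rw [Complex.norm_real, Real.norm_eq_abs, abs_of_pos (by linarith)]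
      linarith
    obtain ⟨z, hzB, hφz⟩ := hball hwb
    have hstar := moment_eq n r hr A φ hsymp hequiv h0 z hzB j
    rw [hφz] at hstar
    have hcollapse : ∑ i', (((A : Matrix (Fin n) (Fin n) ℤ) i' j : ℤ) : ℝ)
        * Complex.normSq (wpt i')
        = (((A : Matrix (Fin n) (Fin n) ℤ) i j : ℤ) : ℝ)
            * Complex.normSq (((ε/2 : ℝ) : ℂ)) := by
      rw [Finset.sum_eq_single i]
      · rw [hwpt]; simp [EuclideanSpace.single_apply]
      · intro b _ hb
        rw [hwpt]
        simp [EuclideanSpace.single_apply, hb]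
      · intro h; exact absurd (Finset.mem_univ i) h
    rw [hcollapse] at hstar
    have hq : 0 < Complex.normSq (((ε/2 : ℝ) : ℂ)) := by
      rw [Complex.normSq_ofReal]; positivity
    have : 0 ≤ (((A : Matrix (Fin n) (Fin n) ℤ) i j : ℤ) : ℝ) := by
      nlinarith [Complex.normSq_nonneg (z j), hq, hstar]
    exact_mod_cast this
  -- the inverse moment identity
  have hMN : ((A : Matrix (Fin n) (Fin n) ℤ) * ((A⁻¹ : GL (Fin n) ℤ) : Matrix (Fin n) (Fin n) ℤ))
      = 1 := by exact_mod_cast Units.mul_inv A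
  have hinvmom : ∀ z ∈ B, ∀ i, Complex.normSq (φ z i)
      = ∑ j, ((((A⁻¹ : GL (Fin n) ℤ) : Matrix (Fin n) (Fin n) ℤ) j i : ℤ) : ℝ)
          * Complex.normSq (z j) := by
    intro z hz i
    have hswap : ∑ j, ((((A⁻¹ : GL (Fin n) ℤ) : Matrix (Fin n) (Fin n) ℤ) j i : ℤ) : ℝ)
          * Complex.normSq (z j)
        = ∑ i', (∑ j, (((A : Matrix (Fin n) (Fin n) ℤ) i' j : ℤ) : ℝ)
            * ((((A⁻¹ : GL (Fin n) ℤ) : Matrix (Fin n) (Fin n) ℤ) j i : ℤ) : ℝ))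
            * Complex.normSq (φ z i') := by
      calc ∑ j, ((((A⁻¹ : GL (Fin n) ℤ) : Matrix (Fin n) (Fin n) ℤ) j i : ℤ) : ℝ)
            * Complex.normSq (z j)
          = ∑ j, ((((A⁻¹ : GL (Fin n) ℤ) : Matrix (Fin n) (Fin n) ℤ) j i : ℤ) : ℝ)
            * ∑ i', (((A : Matrix (Fin n) (Fin n) ℤ) i' j : ℤ) : ℝ)
              * Complex.normSq (φ z i') := by
            refine Finset.sum_congr rfl fun j _ => ?_
            rw [moment_eq n r hr A φ hsymp hequiv h0 z hz j]
        _ = ∑ j, ∑ i', ((((A⁻¹ : GL (Fin n) ℤ) : Matrix (Fin n) (Fin n) ℤ) j i : ℤ) : ℝ)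
            * ((((A : Matrix (Fin n) (Fin n) ℤ) i' j : ℤ) : ℝ)
              * Complex.normSq (φ z i')) := by
            refine Finset.sum_congr rfl fun j _ => ?_
            rw [Finset.mul_sum]
        _ = ∑ i', ∑ j, ((((A⁻¹ : GL (Fin n) ℤ) : Matrix (Fin n) (Fin n) ℤ) j i : ℤ) : ℝ)
            * ((((A : Matrix (Fin n) (Fin n) ℤ) i' j : ℤ) : ℝ)
              * Complex.normSq (φ z i')) := Finset.sum_comm
        _ = ∑ i', (∑ j, (((A : Matrix (Fin n) (Fin n) ℤ) i' j : ℤ) : ℝ)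
            * ((((A⁻¹ : GL (Fin n) ℤ) : Matrix (Fin n) (Fin n) ℤ) j i : ℤ) : ℝ))
            * Complex.normSq (φ z i') := by
            refine Finset.sum_congr rfl fun i' _ => ?_
            rw [Finset.sum_mul]
            refine Finset.sum_congr rfl fun j _ => ?_
            ring
    rw [hswap]
    have hdelta : ∀ i', (∑ j, (((A : Matrix (Fin n) (Fin n) ℤ) i' j : ℤ) : ℝ)
        * ((((A⁻¹ : GL (Fin n) ℤ) : Matrix (Fin n) (Fin n) ℤ) j i : ℤ) : ℝ))
        = if i' = i then 1 else 0 := by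
      intro i'
      have h1 : ((A : Matrix (Fin n) (Fin n) ℤ)
          * ((A⁻¹ : GL (Fin n) ℤ) : Matrix (Fin n) (Fin n) ℤ)) i' i
          = if i' = i then 1 else 0 := by rw [hMN]; simp [Matrix.one_apply]
      rw [Matrix.mul_apply] at h1
      calc ∑ j, (((A : Matrix (Fin n) (Fin n) ℤ) i' j : ℤ) : ℝ)
            * ((((A⁻¹ : GL (Fin n) ℤ) : Matrix (Fin n) (Fin n) ℤ) j i : ℤ) : ℝ)
          = ((∑ j, (A : Matrix (Fin n) (Fin n) ℤ) i' j
              * ((A⁻¹ : GL (Fin n) ℤ) : Matrix (Fin n) (Fin n) ℤ) j i : ℤ) : ℝ) := by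
            rw [Int.cast_sum]
            exact Finset.sum_congr rfl fun j _ => (Int.cast_mul _ _).symm
        _ = (((if i' = i then 1 else 0 : ℤ) : ℤ) : ℝ) := by rw [h1]
        _ = if i' = i then (1:ℝ) else 0 := by split <;> simp
    rw [Finset.sum_congr rfl fun i' _ => by rw [hdelta i']]
    simp [ite_mul]
  -- entries of A⁻¹ are nonnegative
  have hNnn : ∀ j i, 0 ≤ ((A⁻¹ : GL (Fin n) ℤ) : Matrix (Fin n) (Fin n) ℤ) j i := by
    intro j i
    set zpt : EuclideanSpace ℂ (Fin n) := EuclideanSpace.single j ((r : ℂ)) with hzpt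
    have hzb : zpt ∈ B := by
      rw [hB, Metric.mem_closedBall, dist_zero_right, hzpt, EuclideanSpace.norm_single]
      simp [abs_of_pos hr]
    have h2 := hinvmom zpt hzb i
    have hcollapse : ∑ j', ((((A⁻¹ : GL (Fin n) ℤ) : Matrix (Fin n) (Fin n) ℤ) j' i : ℤ) : ℝ)
        * Complex.normSq (zpt j')
        = ((((A⁻¹ : GL (Fin n) ℤ) : Matrix (Fin n) (Fin n) ℤ) j i : ℤ) : ℝ)
            * Complex.normSq (((r : ℝ) : ℂ)) := by
      rw [Finset.sum_eq_single j]
      · rw [hzpt]; simp [EuclideanSpace.single_apply]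
      · intro b _ hb
        rw [hzpt]
        simp [EuclideanSpace.single_apply, hb]
      · intro h; exact absurd (Finset.mem_univ j) h
    rw [hcollapse] at h2
    have hq : 0 < Complex.normSq (((r : ℝ) : ℂ)) := by
      rw [Complex.normSq_ofReal]; positivity
    have : 0 ≤ ((((A⁻¹ : GL (Fin n) ℤ) : Matrix (Fin n) (Fin n) ℤ) j i : ℤ) : ℝ) := by
      nlinarith [Complex.normSq_nonneg (φ zpt i), hq, h2]
    exact_mod_cast this
  obtain ⟨σ, hσ⟩ := perm_of_nonneg n A hAnn hNnn
  refine ⟨σ, fun z hz i => ?_, hσ⟩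
  have hstar := moment_eq n r hr A φ hsymp hequiv h0 z hz (σ i)
  have hcollapse : ∑ i', (((A : Matrix (Fin n) (Fin n) ℤ) i' (σ i) : ℤ) : ℝ)
      * Complex.normSq (φ z i') = Complex.normSq (φ z i) := by
    rw [Finset.sum_eq_single i]
    · rw [hσ i (σ i), if_pos rfl]; norm_num
    · intro b _ hb
      rw [hσ b (σ i), if_neg (fun h => hb (σ.injective h.symm))]
      norm_num
    · intro h; exact absurd (Finset.mem_univ i) h
  rw [hcollapse] at hstar
  rw [Complex.norm_def, Complex.norm_def, hstar]
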